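/- If X is a normally distributed random variable with mean μ and standard deviation σ, and Φ is the CDF of the standard normal distribution, then E[Φ(αX + β)] = Φ((β + αμ)/√(1 + α²σ²)) for any real α, β. -/

import Mathlib

/-!
Write `Φ(z) = P(Y ≤ z)` with `Y ~ N(0, 1)` independent of `Z = αX + β ~ N(αμ + β, α²σ²)`.
Then `E[Φ(Z)] = P(Y - Z ≤ 0)`, and `Y - Z ~ N(-(αμ + β), 1 + α²σ²)` since Gaussian laws
are closed under convolution; standardizing `Y - Z` gives the claim.
-/

open MeasureTheory ProbabilityTheory

noncomputable def stdNormCDF : ℝ → ℝ := ProbabilityTheory.cdf (ProbabilityTheory.gaussianReal 0 1)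

open Set
open scoped NNReal

theorem integral_cdf_eq_cdf_conv_map_neg (ν ρ : Measure ℝ) [IsProbabilityMeasure ν]
    [IsProbabilityMeasure ρ] :
    ∫ z, cdf ν z ∂ρ = cdf (ν ∗ ρ.map Neg.neg) 0 := by
  have := Measure.isProbabilityMeasure_map (μ := ρ) measurable_neg.aemeasurable
  have hS : MeasurableSet ((fun p : ℝ × ℝ ↦ p.1 + p.2) ⁻¹' Iic 0) :=
    measurable_add measurableSet_Iic
  have hconv : (ν ∗ ρ.map Neg.neg) (Iic 0) = ∫⁻ z, ν (Iic z) ∂ρ := by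
    rw [Measure.conv, Measure.map_apply measurable_add measurableSet_Iic,
      Measure.prod_apply_symm hS,
      lintegral_map (measurable_measure_prodMk_right hS) measurable_neg]
    congr! with z
    ext x
    simp
  have hmono : Monotone fun z ↦ ν (Iic z) := fun _ _ h ↦ measure_mono (Iic_subset_Iic.2 h)
  simp_rw [cdf_eq_real, measureReal_def, hconv]
  exact integral_toReal hmono.measurable.aemeasurable (ae_of_all _ fun _ ↦ measure_lt_top _ _)

theorem cdf_gaussianReal (m : ℝ) {v : ℝ≥0} (hv : v ≠ 0) (x : ℝ) :
    cdf (gaussianReal m v) x = stdNormCDF ((x - m) / √v) := by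
  have hstd : (gaussianReal m v).map (fun y ↦ (y - m) / √v) = gaussianReal 0 1 := by
    have hsq : NNReal.mk (√(v : ℝ) ^ 2) (sq_nonneg _) = v := NNReal.eq (Real.sq_sqrt v.2)
    have h := (gaussianReal_div_const
      (gaussianReal_sub_const (HasLaw.id (μ := gaussianReal m v)) m) √v).map_eq
    rwa [hsq, sub_self, zero_div, div_self hv] at h
  have hpre : (fun y ↦ (y - m) / √v) ⁻¹' Iic ((x - m) / √v) = Iic x := by
    ext y
    simp [div_le_div_iff_of_pos_right (show 0 < √(v : ℝ) by positivity)]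
  rw [stdNormCDF, cdf_eq_real, cdf_eq_real, ← hstd,
    map_measureReal_apply (by fun_prop) measurableSet_Iic, hpre]

theorem integral_stdNormCDF_gaussianReal (m : ℝ) (v : ℝ≥0) :
    ∫ z, stdNormCDF z ∂gaussianReal m v = stdNormCDF (m / √(1 + v)) := by
  rw [stdNormCDF, integral_cdf_eq_cdf_conv_map_neg, gaussianReal_map_neg,
    gaussianReal_conv_gaussianReal, cdf_gaussianReal _ (by positivity), zero_add, zero_sub,
    neg_neg, NNReal.coe_add, NNReal.coe_one, stdNormCDF]

theorem integral_stdNormCDF_affine_of_map_eq_gaussianReal {Ω : Type*} [MeasurableSpace Ω]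
    {P : Measure Ω} {X : Ω → ℝ} {m : ℝ} {v : ℝ≥0} (hX : P.map X = gaussianReal m v)
    (a b : ℝ) :
    ∫ ω, stdNormCDF (a * X ω + b) ∂P = stdNormCDF ((a * m + b) / √(1 + a ^ 2 * v)) := by
  have hXlaw : HasLaw X (gaussianReal m v) P :=
    ⟨.of_map_ne_zero (by rw [hX]; exact IsProbabilityMeasure.ne_zero _), hX⟩
  have hΦ : Measurable stdNormCDF := (monotone_cdf _).measurable
  rw [← Function.comp_def stdNormCDF,
    (gaussianReal_add_const (gaussianReal_const_mul hXlaw a) b).integral_comp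
      hΦ.aestronglyMeasurable,
    integral_stdNormCDF_gaussianReal, NNReal.coe_mul, NNReal.coe_mk]

theorem stmt_0_general {Ω : Type*} [MeasurableSpace Ω] (Pr : Measure Ω)
    (X : Ω → ℝ) (μ σ : ℝ)
    (hX : Measure.map X Pr = gaussianReal μ ⟨σ ^ 2, sq_nonneg σ⟩)
    (α β : ℝ) :
    ∫ ω, stdNormCDF (α * X ω + β) ∂Pr
      = stdNormCDF ((β + α * μ) / Real.sqrt (1 + α ^ 2 * σ ^ 2)) := by
  rw [integral_stdNormCDF_affine_of_map_eq_gaussianReal hX, add_comm β]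
  -- `⟨σ ^ 2, _⟩` elaborates to a bare `Subtype.mk`, which `NNReal.coe_mk` does not match.
  rfl

theorem stmt_0 {Ω : Type*} [MeasurableSpace Ω] (Pr : Measure Ω) [IsProbabilityMeasure Pr]
    (X : Ω → ℝ) (μ σ : ℝ) (hσ : 0 < σ)
    (hX : Measure.map X Pr = gaussianReal μ ⟨σ ^ 2, sq_nonneg σ⟩)
    (α β : ℝ) :
    ∫ ω, stdNormCDF (α * X ω + β) ∂Pr
      = stdNormCDF ((β + α * μ) / Real.sqrt (1 + α ^ 2 * σ ^ 2)) :=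
  stmt_0_general Pr X μ σ hX α β
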